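/- Let L = k² + u₁(t,x)k + u₀(t,x) + u_{−1}(t,x)k^{−1} + u_{−2}(t,x)k^{−2} and A = −u_{−2}^{1/2} k^{−1} (assume u_{−2} > 0). Then the Lax equation ∂L/∂t = {A, L} with {f,g} = k(f_k g_x − f_x g_k) is equivalent to: ∂u₁/∂t = 2∂_x(u_{−2}^{1/2}), ∂u₀/∂t = ∂_x(u_{−2}^{1/2} u₁), ∂u_{−1}/∂t = u_{−2}^{1/2} ∂_x u₀, ∂u_{−2}/∂t = u_{−2}^{1/2} ∂_x u_{−1} − u_{−1} ∂_x(u_{−2}^{1/2}), together with the constraint 0 = u_{−2}^{1/2} ∂_x u_{−2} − 2 u_{−2} ∂_x(u_{−2}^{1/2}) (which holds identically). -/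

import Mathlib

/-- The dispersionless bracket in the variables `(k,x)` at fixed time `t`. -/
noncomputable def dBracket3 (f g : ℝ → ℝ → ℝ → ℝ) (k x t : ℝ) : ℝ :=
  k * (deriv (fun k' => f k' x t) k * deriv (fun x' => g k x' t) x -
       deriv (fun x' => f k x' t) x * deriv (fun k' => g k' x t) k)

private lemma sliceT {u : ℝ → ℝ → ℝ} (hu : ContDiff ℝ (⊤ : ℕ∞) fun p : ℝ × ℝ => u p.1 p.2)
    (x t : ℝ) : HasDerivAt (fun t' => u t' x) (deriv (fun t' => u t' x) t) t := by
  have hd : Differentiable ℝ (fun t' => u t' x) := fun y =>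
    (((hu.differentiable (by simp)) (y, x)).comp y (differentiableAt_id.prodMk (differentiableAt_const x)) :
      DifferentiableAt ℝ ((fun p : ℝ × ℝ => u p.1 p.2) ∘ fun t' => (id t', x)) y)
  exact (hd t).hasDerivAt

private lemma sliceX {u : ℝ → ℝ → ℝ} (hu : ContDiff ℝ (⊤ : ℕ∞) fun p : ℝ × ℝ => u p.1 p.2)
    (t x : ℝ) : HasDerivAt (fun x' => u t x') (deriv (fun x' => u t x') x) x := by
  have hd : Differentiable ℝ (fun x' => u t x') := fun y =>
    ((hu.differentiable (by simp)) (t, y)).comp y ((differentiableAt_const t).prodMk differentiableAt_id)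
  exact (hd x).hasDerivAt

/-- The `t_{-1,0}` flow of the (2,2)-dispersionless bigraded Toda hierarchy: for
`L = k² + u₁ k + u₀ + u₋₁ k⁻¹ + u₋₂ k⁻²` and `A = −√u₋₂ · k⁻¹` (with `u₋₂ > 0`),
the Lax equation `∂L/∂t = {A,L}` is equivalent to the system
`∂u₁/∂t = 2 ∂ₓ(√u₋₂)`, `∂u₀/∂t = ∂ₓ(√u₋₂ · u₁)`, `∂u₋₁/∂t = √u₋₂ ∂ₓu₀`,
`∂u₋₂/∂t = √u₋₂ ∂ₓu₋₁ − u₋₁ ∂ₓ(√u₋₂)`, together with the (identically satisfied)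
constraint `0 = √u₋₂ ∂ₓu₋₂ − 2 u₋₂ ∂ₓ(√u₋₂)`. -/
theorem lax_22_tm10_flow (u1 u0 um1 um2 : ℝ → ℝ → ℝ)
    (hu1 : ContDiff ℝ (⊤ : ℕ∞) fun p : ℝ × ℝ => u1 p.1 p.2)
    (hu0 : ContDiff ℝ (⊤ : ℕ∞) fun p : ℝ × ℝ => u0 p.1 p.2)
    (hum1 : ContDiff ℝ (⊤ : ℕ∞) fun p : ℝ × ℝ => um1 p.1 p.2)
    (hum2 : ContDiff ℝ (⊤ : ℕ∞) fun p : ℝ × ℝ => um2 p.1 p.2)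
    (hpos : ∀ t x : ℝ, 0 < um2 t x) :
    (∀ k x t : ℝ, k ≠ 0 →
      deriv (fun t' => k ^ 2 + u1 t' x * k + u0 t' x + um1 t' x * k⁻¹ + um2 t' x * k⁻¹ ^ 2) t
        = dBracket3 (fun k' x' t' => -Real.sqrt (um2 t' x') * k'⁻¹)
            (fun k' x' t' =>
              k' ^ 2 + u1 t' x' * k' + u0 t' x' + um1 t' x' * k'⁻¹ + um2 t' x' * k'⁻¹ ^ 2)
            k x t) ↔
    (∀ t x : ℝ,
      deriv (fun t' => u1 t' x) t = 2 * deriv (fun x' => Real.sqrt (um2 t x')) x ∧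
      deriv (fun t' => u0 t' x) t = deriv (fun x' => Real.sqrt (um2 t x') * u1 t x') x ∧
      deriv (fun t' => um1 t' x) t = Real.sqrt (um2 t x) * deriv (fun x' => u0 t x') x ∧
      deriv (fun t' => um2 t' x) t
        = Real.sqrt (um2 t x) * deriv (fun x' => um1 t x') x
          - um1 t x * deriv (fun x' => Real.sqrt (um2 t x')) x ∧
      0 = Real.sqrt (um2 t x) * deriv (fun x' => um2 t x') x
          - 2 * um2 t x * deriv (fun x' => Real.sqrt (um2 t x')) x) := by
  -- basic sqrt facts
  have hs : ∀ t x : ℝ, HasDerivAt (fun x' => Real.sqrt (um2 t x'))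
      (deriv (fun x' => Real.sqrt (um2 t x')) x) x := fun t x =>
    (((sliceX hum2 t x).differentiableAt).sqrt (ne_of_gt (hpos t x))).hasDerivAt
  have hmul : ∀ t x : ℝ, Real.sqrt (um2 t x) * Real.sqrt (um2 t x) = um2 t x := fun t x =>
    Real.mul_self_sqrt (hpos t x).le
  have hsq : ∀ t x : ℝ, deriv (fun x' => um2 t x') x
      = 2 * Real.sqrt (um2 t x) * deriv (fun x' => Real.sqrt (um2 t x')) x := by
    intro t x
    have h2 := (hs t x).mul (hs t x)
    have heq : (fun x' => Real.sqrt (um2 t x') * Real.sqrt (um2 t x')) = fun x' => um2 t x' := by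
      funext y; exact hmul t y
    rw [show ((fun x' => Real.sqrt (um2 t x')) * fun x' => Real.sqrt (um2 t x')) = fun x' => um2 t x' from heq] at h2
    rw [h2.deriv]; ring
  -- product rule for √um2 · u1
  have hprod : ∀ t x : ℝ, deriv (fun x' => Real.sqrt (um2 t x') * u1 t x') x
      = deriv (fun x' => Real.sqrt (um2 t x')) x * u1 t x
        + Real.sqrt (um2 t x) * deriv (fun x' => u1 t x') x := fun t x =>
    ((hs t x).mul (sliceX hu1 t x)).deriv
  -- time derivative of L
  have keyL : ∀ k x t : ℝ,
      deriv (fun t' => k ^ 2 + u1 t' x * k + u0 t' x + um1 t' x * k⁻¹ + um2 t' x * k⁻¹ ^ 2) t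
      = deriv (fun t' => u1 t' x) t * k + deriv (fun t' => u0 t' x) t
        + deriv (fun t' => um1 t' x) t * k⁻¹ + deriv (fun t' => um2 t' x) t * k⁻¹ ^ 2 := by
    intro k x t
    have h := (((((hasDerivAt_const t (k ^ 2)).add ((sliceT hu1 x t).mul_const k)).add
      (sliceT hu0 x t)).add ((sliceT hum1 x t).mul_const k⁻¹)).add
      ((sliceT hum2 x t).mul_const (k⁻¹ ^ 2)))
    rw [HasDerivAt.deriv (f := fun t' => k ^ 2 + u1 t' x * k + u0 t' x + um1 t' x * k⁻¹ + um2 t' x * k⁻¹ ^ 2) h]; ring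
  -- the bracket computed explicitly
  have keyB : ∀ k x t : ℝ, k ≠ 0 →
      dBracket3 (fun k' x' t' => -Real.sqrt (um2 t' x') * k'⁻¹)
        (fun k' x' t' =>
          k' ^ 2 + u1 t' x' * k' + u0 t' x' + um1 t' x' * k'⁻¹ + um2 t' x' * k'⁻¹ ^ 2) k x t
      = 2 * deriv (fun x' => Real.sqrt (um2 t x')) x * k
        + (Real.sqrt (um2 t x) * deriv (fun x' => u1 t x') x
           + deriv (fun x' => Real.sqrt (um2 t x')) x * u1 t x)
        + Real.sqrt (um2 t x) * deriv (fun x' => u0 t x') x * k⁻¹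
        + (Real.sqrt (um2 t x) * deriv (fun x' => um1 t x') x
           - um1 t x * deriv (fun x' => Real.sqrt (um2 t x')) x) * k⁻¹ ^ 2 := by
    intro k x t hk
    have hAk : HasDerivAt (fun k' => -Real.sqrt (um2 t x) * k'⁻¹)
        (-Real.sqrt (um2 t x) * -(k ^ 2)⁻¹) k := (hasDerivAt_inv hk).const_mul _
    have hAx : HasDerivAt (fun x' => -Real.sqrt (um2 t x') * k⁻¹)
        (-deriv (fun x' => Real.sqrt (um2 t x')) x * k⁻¹) x := ((hs t x).neg).mul_const k⁻¹
    have hLk : HasDerivAt (fun k' =>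
        k' ^ 2 + u1 t x * k' + u0 t x + um1 t x * k'⁻¹ + um2 t x * k'⁻¹ ^ 2)
        (2 * k + u1 t x + um1 t x * -(k ^ 2)⁻¹
          + um2 t x * (2 * k⁻¹ * -(k ^ 2)⁻¹)) k := by
      have h1 : HasDerivAt (fun k' : ℝ => k' ^ 2) ((2 : ℕ) * k ^ 1) k := hasDerivAt_pow 2 k
      have h2 : HasDerivAt (fun k' : ℝ => u1 t x * k') (u1 t x * 1) k :=
        (hasDerivAt_id k).const_mul (u1 t x)
      have h4 : HasDerivAt (fun k' : ℝ => um1 t x * k'⁻¹) (um1 t x * -(k ^ 2)⁻¹) k :=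
        (hasDerivAt_inv hk).const_mul (um1 t x)
      have h5 : HasDerivAt (fun k' : ℝ => um2 t x * k'⁻¹ ^ 2)
          (um2 t x * (2 * k⁻¹ * -(k ^ 2)⁻¹)) k := by
        have := ((hasDerivAt_inv hk).pow 2).const_mul (um2 t x)
        simpa [mul_comm, mul_assoc, mul_left_comm] using this
      have h := (((h1.add h2).add (hasDerivAt_const k (u0 t x))).add h4).add h5
      refine h.congr_deriv ?_
      push_cast; ring
    have hLx : HasDerivAt (fun x' =>
        k ^ 2 + u1 t x' * k + u0 t x' + um1 t x' * k⁻¹ + um2 t x' * k⁻¹ ^ 2)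
        (deriv (fun x' => u1 t x') x * k + deriv (fun x' => u0 t x') x
          + deriv (fun x' => um1 t x') x * k⁻¹ + deriv (fun x' => um2 t x') x * k⁻¹ ^ 2) x := by
      have h := (((((hasDerivAt_const x (k ^ 2)).add ((sliceX hu1 t x).mul_const k)).add
        (sliceX hu0 t x)).add ((sliceX hum1 t x).mul_const k⁻¹)).add
        ((sliceX hum2 t x).mul_const (k⁻¹ ^ 2)))
      refine h.congr_deriv ?_
      ring
    unfold dBracket3
    rw [hAk.deriv, hAx.deriv, hLk.deriv, hLx.deriv, hsq t x, ← hmul t x]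
    field_simp
    rw [Real.sqrt_sq (Real.sqrt_nonneg _)]
    ring
  constructor
  · intro h t x
    have E : ∀ k : ℝ, k ≠ 0 →
        deriv (fun t' => u1 t' x) t * k + deriv (fun t' => u0 t' x) t
          + deriv (fun t' => um1 t' x) t * k⁻¹ + deriv (fun t' => um2 t' x) t * k⁻¹ ^ 2
        = 2 * deriv (fun x' => Real.sqrt (um2 t x')) x * k
          + (Real.sqrt (um2 t x) * deriv (fun x' => u1 t x') x
             + deriv (fun x' => Real.sqrt (um2 t x')) x * u1 t x)
          + Real.sqrt (um2 t x) * deriv (fun x' => u0 t x') x * k⁻¹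
          + (Real.sqrt (um2 t x) * deriv (fun x' => um1 t x') x
             - um1 t x * deriv (fun x' => Real.sqrt (um2 t x')) x) * k⁻¹ ^ 2 := by
      intro k hk
      have := h k x t hk
      rwa [keyL k x t, keyB k x t hk] at this
    have e1 := E 1 one_ne_zero
    have e2 := E 2 two_ne_zero
    have e3 := E (-1) (by norm_num)
    have e4 := E (-2) (by norm_num)
    norm_num at e1 e2 e3 e4
    refine ⟨by linarith, ?_, by linarith, by linarith, ?_⟩
    · rw [hprod t x]; linarith
    · rw [hsq t x]
      linear_combination (-2 * deriv (fun x' => Real.sqrt (um2 t x')) x) * hmul t x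
  · intro h k x t hk
    obtain ⟨e1, e2, e3, e4, _⟩ := h t x
    rw [hprod t x] at e2
    rw [keyL k x t, keyB k x t hk, e1, e2, e3, e4]
    ring
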